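/- Let A be a commutative ring, x ∈ A, and let C be a derived x-complete object of D(A). If H^j(C ⊗^L_A A/xA) = 0 for some fixed j (where A/xA is taken as the cone of multiplication by x, i.e. the derived quotient), then H^j(C ⊗^L_A A/x^k A) = 0 for all k ≥ 1 and H^j(C) = 0. -/

import Mathlib

open CategoryTheory HomologicalComplex

open CategoryTheory Limits in
private lemma aux_epi_conj_iff {C : Type*} [Category C] {X Y X' Y' : C} (e₁ : X ≅ X') (e₂ : Y ≅ Y')
    (f : X ⟶ Y) (g : X' ⟶ Y') (h : f = e₁.hom ≫ g ≫ e₂.inv) : Epi f ↔ Epi g := by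
  subst h
  constructor
  · intro hf
    have : Epi (e₁.inv ≫ (e₁.hom ≫ g ≫ e₂.inv) ≫ e₂.hom) := by
      apply epi_comp
    simpa using this
  · intro hg
    infer_instance

open CategoryTheory Limits in
private lemma aux_mono_conj_iff {C : Type*} [Category C] {X Y X' Y' : C} (e₁ : X ≅ X') (e₂ : Y ≅ Y')
    (f : X ⟶ Y) (g : X' ⟶ Y') (h : f = e₁.hom ≫ g ≫ e₂.inv) : Mono f ↔ Mono g := by
  subst h
  constructor
  · intro hf
    have : Mono (e₁.inv ≫ (e₁.hom ≫ g ≫ e₂.inv) ≫ e₂.hom) := by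
      apply mono_comp
    simpa using this
  · intro hg
    infer_instance

open CategoryTheory Limits in
private lemma aux_cone_homology_isZero_iff (A : Type) [CommRing A]
    (C : CochainComplex (ModuleCat.{0} A) ℤ) (φ : C ⟶ C) (j : ℤ) :
    IsZero ((CochainComplex.mappingCone φ).homology j) ↔
      Epi (homologyMap φ j) ∧ Mono (homologyMap φ (j + 1)) := by
  set F := HomotopyCategory.homologyFunctor (ModuleCat.{0} A) (ComplexShape.up ℤ) 0 with hF
  have hT := HomotopyCategory.mappingCone_triangleh_distinguished φ
  set T := CochainComplex.mappingCone.triangleh φ with hTdef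
  have h₁ := (F.homologySequence_exact₃ T hT j (j+1) rfl).isZero_X₂_iff
  have h₂ := F.homologySequence_epi_shift_map_mor₁_iff T hT j
  have h₃ := F.homologySequence_mono_shift_map_mor₁_iff T hT j (j+1) rfl
  dsimp at h₁
  rw [← h₂, ← h₃] at h₁
  have e := fun (n : ℤ) => HomotopyCategory.homologyFunctorFactors (ModuleCat.{0} A)
    (ComplexShape.up ℤ) n
  have hobj : IsZero ((F.shift j).obj T.obj₃) ↔
      IsZero ((CochainComplex.mappingCone φ).homology j) :=
    ((e j).app (CochainComplex.mappingCone φ)).isZero_iff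
  have hmor : ∀ n : ℤ, ((F.shift n).map T.mor₁ =
      ((e n).app C).hom ≫ homologyMap φ n ≫ ((e n).app C).inv) := by
    intro n
    have h := (e n).hom.naturality φ
    dsimp at h ⊢
    erw [← homologyFunctor_map, ← Category.assoc, ← h]
    erw [Category.assoc, Iso.hom_inv_id_app, Category.comp_id]
    rfl
  rw [← hobj, h₁, aux_epi_conj_iff _ _ _ _ (hmor j), aux_mono_conj_iff _ _ _ _ (hmor (j+1))]
  exact Iff.rfl

private lemma aux_homologyMap_smul (A : Type) [CommRing A]
    (C : CochainComplex (ModuleCat.{0} A) ℤ) (a : A) (n : ℤ) :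
    homologyMap (a • 𝟙 C) n = a • 𝟙 (C.homology n) := by
  have h : (shortComplexFunctor (ModuleCat.{0} A) (ComplexShape.up ℤ) n).map (a • 𝟙 C)
      = a • 𝟙 (C.sc n) := by
    ext <;> rfl
  show CategoryTheory.ShortComplex.homologyMap _ = _
  rw [h, CategoryTheory.ShortComplex.homologyMap_smul, CategoryTheory.ShortComplex.homologyMap_id]
  rfl

open CategoryTheory Limits in
private lemma aux_isZero_iff (A : Type) [CommRing A] (M : ModuleCat.{0} A) :
    IsZero M ↔ ∀ y : M, y = 0 := by
  constructor
  · intro h y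
    have hid : 𝟙 M = 0 := h.eq_of_src _ _
    calc y = (𝟙 M) y := rfl
    _ = (0 : M ⟶ M) y := by rw [hid]
    _ = 0 := rfl
  · intro h
    have : Subsingleton M := ⟨fun a b => by rw [h a, h b]⟩
    exact ModuleCat.isZero_of_subsingleton M

/-- Let `A` be a commutative ring, `x ∈ A`, and `C` a derived `x`-complete
object of `D(A)`, realized as a cochain complex of `A`-modules whose derived
`x`-completeness is expressed by the vanishing of `lim` and `lim¹` of the
multiplication-by-`x` towers of its cohomology groups (equivalently, the derived limit of
the tower `⋯ → C →·x C` is zero), i.e. by the bijectivity of `(aₖ) ↦ (aₖ − x·aₖ₊₁)` on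
`∏ₖ Hⁱ(C)` for all `i`.  Realizing the derived quotient `C ⊗^L_A A/xᵏA` as the mapping
cone of multiplication by `xᵏ` on `C`: if `Hʲ(C ⊗^L_A A/xA) = 0` for some fixed `j`, then
`Hʲ(C ⊗^L_A A/xᵏA) = 0` for all `k ≥ 1`, and `Hʲ(C) = 0`. -/
theorem derived_x_complete_vanishing
    (A : Type) [CommRing A] (x : A)
    (C : CochainComplex (ModuleCat.{0} A) ℤ)
    (hcomplete : ∀ i : ℤ,
      Function.Bijective
        (fun (a : ℕ → ↥(C.homology i)) => fun k => a k - x • a (k + 1)))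
    (j : ℤ)
    (hmod : ∀ y : ↥((CochainComplex.mappingCone (x • 𝟙 C)).homology j), y = 0) :
    (∀ k : ℕ, 1 ≤ k →
      ∀ y : ↥((CochainComplex.mappingCone (x ^ k • 𝟙 C)).homology j), y = 0) ∧
    (∀ y : ↥(C.homology j), y = 0) := by
  -- translate hmod
  have hz1 : Limits.IsZero ((CochainComplex.mappingCone (x • 𝟙 C)).homology j) :=
    (aux_isZero_iff A _).2 hmod
  obtain ⟨hepi, hmono⟩ := (aux_cone_homology_isZero_iff A C (x • 𝟙 C) j).1 hz1
  rw [aux_homologyMap_smul] at hepi hmono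
  have hsurj : Function.Surjective (fun m : ↥(C.homology j) => x • m) := by
    have := (ModuleCat.epi_iff_surjective _).1 hepi
    intro m
    obtain ⟨n, hn⟩ := this m
    exact ⟨n, hn⟩
  have hinj : Function.Injective (fun m : ↥(C.homology (j+1)) => x • m) := by
    have := (ModuleCat.mono_iff_injective _).1 hmono
    intro m n hmn
    exact this hmn
  -- powers
  have hsurjk : ∀ k : ℕ, Function.Surjective (fun m : ↥(C.homology j) => x ^ k • m) := by
    intro k
    induction k with
    | zero => intro m; exact ⟨m, by simp⟩
    | succ k ih =>
      intro m
      obtain ⟨m', hm'⟩ := hsurj m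
      obtain ⟨m'', hm''⟩ := ih m'
      refine ⟨m'', ?_⟩
      show x ^ (k+1) • m'' = m
      rw [pow_succ', mul_smul]
      simp only at hm'' hm'
      rw [hm'', hm']
  have hinjk : ∀ k : ℕ, Function.Injective (fun m : ↥(C.homology (j+1)) => x ^ k • m) := by
    intro k
    induction k with
    | zero => intro m n h; simpa using h
    | succ k ih =>
      intro m n h
      simp only at h
      rw [pow_succ', mul_smul, mul_smul] at h
      exact ih (hinj h)
  constructor
  · intro k _ y
    revert y
    rw [← aux_isZero_iff]
    rw [aux_cone_homology_isZero_iff A C (x ^ k • 𝟙 C) j]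
    constructor
    · rw [aux_homologyMap_smul, ModuleCat.epi_iff_surjective]
      exact hsurjk k
    · rw [aux_homologyMap_smul, ModuleCat.mono_iff_injective]
      exact hinjk k
  · intro m
    -- build a compatible sequence of divided elements
    let a : ℕ → ↥(C.homology j) := fun k =>
      Nat.rec m (fun _ prev => Classical.choose (hsurj prev)) k
    have ha : ∀ k, x • a (k + 1) = a k := fun k => Classical.choose_spec (hsurj (a k))
    have h0 : (fun k => a k - x • a (k + 1)) =
        (fun k => (fun _ => (0 : ↥(C.homology j))) k
          - x • (fun _ => (0 : ↥(C.homology j))) (k + 1)) := by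
      funext k
      rw [ha k]
      simp
    have := (hcomplete j).1 h0
    have hm : a 0 = 0 := congrFun this 0
    exact hm
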